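/- Let S be an η-sparse family of dyadic cubes, σ a weight, R ∈ S, λ ≥ 1 a constant, and let F_λ = {Q ∈ S : ∫_Q M(σχ_Q) ≤ λ σ(Q)}, where M is the Hardy–Littlewood maximal operator. Then ∑_{Q ∈ F_λ, Q ⊆ R} σ(Q) ≤ C λ σ(R), with C depending only on η and n. More precisely, if λ_Q(σ) = (∫_Q M(σχ_Q))/σ(Q) and F_k = {Q ∈ S : 2^k ≤ λ_Q(σ) ≤ 2^{k+1}}, then ∑_{Q ∈ F_k, Q ⊆ R} σ(Q) ≤ C 2^k σ(R). -/

import Mathlib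

open MeasureTheory Set
open scoped ENNReal

noncomputable section

def dyadicCube (n : ℕ) (k : ℤ) (m : Fin n → ℤ) : Set (Fin n → ℝ) :=
  {x | ∀ i, (m i : ℝ) * (2:ℝ) ^ k ≤ x i ∧ x i < ((m i : ℝ) + 1) * (2:ℝ) ^ k}

def IsDyadicCube {n : ℕ} (Q : Set (Fin n → ℝ)) : Prop := ∃ k m, Q = dyadicCube n k m

def IsCube {n : ℕ} (Q : Set (Fin n → ℝ)) : Prop :=
  ∃ (a : Fin n → ℝ) (h : ℝ), 0 < h ∧ Q = {x | ∀ i, a i ≤ x i ∧ x i < a i + h}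

def IsSparse {n : ℕ} (η : ℝ≥0∞) (S : Set (Set (Fin n → ℝ))) : Prop :=
  (∀ Q ∈ S, IsDyadicCube Q) ∧
  ∃ E : Set (Fin n → ℝ) → Set (Fin n → ℝ),
    (∀ Q ∈ S, E Q ⊆ Q ∧ MeasurableSet (E Q) ∧ η * volume Q ≤ volume (E Q)) ∧
    S.PairwiseDisjoint E

def mass {n : ℕ} (w : (Fin n → ℝ) → ℝ≥0∞) (Q : Set (Fin n → ℝ)) : ℝ≥0∞ := ∫⁻ x in Q, w x

def avg {n : ℕ} (w : (Fin n → ℝ) → ℝ≥0∞) (Q : Set (Fin n → ℝ)) : ℝ≥0∞ := mass w Q / volume Q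

def maximalOp {n : ℕ} (f : (Fin n → ℝ) → ℝ≥0∞) (x : Fin n → ℝ) : ℝ≥0∞ :=
  ⨆ (Q : Set (Fin n → ℝ)) (_ : IsCube Q) (_ : x ∈ Q), avg f Q

/-!
Group a finite subfamily `F` under its maximal cubes, which are pairwise disjoint because dyadic
cubes are nested or disjoint. If `Q ⊆ P`, the average of `σ χ_P` over `Q` is `σ(Q)/|Q|`, so
`M(σ χ_P) ≥ σ(Q)/|Q|` on the sparse set `E_Q ⊆ Q` and `η σ(Q) ≤ ∫_{E_Q} M(σ χ_P)`. The `E_Q` are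
disjoint, hence `η ∑_{Q ⊆ P} σ(Q) ≤ ∫_P M(σ χ_P) ≤ λ σ(P)`, and summing over the disjoint maximal
cubes inside `R` gives `∑_F σ(Q) ≤ η⁻¹ λ σ(R)`. The band `F_k` lies in the family for
`λ = 2^(k+1)`, so `C = 2 η⁻¹` works for both claims.
-/

theorem Finset.sum_le_sum_sum_filter_of_forall_exists {ι κ M : Type*} [AddCommMonoid M]
    [PartialOrder M] [IsOrderedAddMonoid M] [CanonicallyOrderedAdd M]
    {s : Finset ι} {t : Finset κ} {r : ι → κ → Prop} [∀ i j, Decidable (r i j)]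
    (h : ∀ i ∈ s, ∃ j ∈ t, r i j) (f : ι → M) :
    ∑ i ∈ s, f i ≤ ∑ j ∈ t, ∑ i ∈ s with r i j, f i := by
  rw [Finset.sum_comm' (t' := s) (s' := fun i => t.filter (r i))
    (by simp only [Finset.mem_filter]; tauto)]
  refine Finset.sum_le_sum fun i hi => ?_
  obtain ⟨j, hj, hij⟩ := h i hi
  exact Finset.single_le_sum (f := fun _ => f i) (fun _ _ => zero_le)
    (Finset.mem_filter.2 ⟨hj, hij⟩)

theorem sum_setLIntegral_le_of_pairwiseDisjoint {α ι : Type*} [MeasurableSpace α]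
    {μ : Measure α} {s : Finset ι} {A : ι → Set α} {B : Set α}
    (hd : (s : Set ι).PairwiseDisjoint A) (hm : ∀ i ∈ s, MeasurableSet (A i))
    (hAB : ∀ i ∈ s, A i ⊆ B) (f : α → ℝ≥0∞) :
    ∑ i ∈ s, ∫⁻ x in A i, f x ∂μ ≤ ∫⁻ x in B, f x ∂μ := by
  rw [← lintegral_biUnion_finset hd hm]
  exact lintegral_mono_set (iUnion₂_subset hAB)

-- The endpoints are integer multiples of `a`, so the strict overlap inequalities become `≤`.
theorem Ico_subset_Ico_of_mem {a x : ℝ} (ha : 0 < a) {m m' N : ℤ}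
    (hx : x ∈ Ico (m * a) ((m + 1) * a)) (hx' : x ∈ Ico (m' * N * a) ((m' + 1) * N * a)) :
    Ico (m * a) ((m + 1) * a) ⊆ Ico (m' * N * a) ((m' + 1) * N * a) := by
  have hlt : (m : ℝ) < (m' + 1) * N := lt_of_mul_lt_mul_right (hx.1.trans_lt hx'.2) ha.le
  have hlt' : (m' * N : ℝ) < m + 1 := lt_of_mul_lt_mul_right (hx'.1.trans_lt hx.2) ha.le
  have hle : m' * N ≤ m := Int.lt_add_one_iff.mp (by exact_mod_cast hlt')
  have hle' : m + 1 ≤ (m' + 1) * N := by exact_mod_cast hlt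
  refine Ico_subset_Ico ?_ ?_
  · gcongr; exact_mod_cast hle
  · gcongr; exact_mod_cast hle'

section DyadicCube

variable {n : ℕ}

theorem dyadicCube_eq_pi (k : ℤ) (m : Fin n → ℤ) :
    dyadicCube n k m = pi univ fun i => Ico (m i * (2 : ℝ) ^ k) ((m i + 1) * (2 : ℝ) ^ k) := by
  ext x
  simp [dyadicCube]

theorem volume_dyadicCube (k : ℤ) (m : Fin n → ℤ) :
    volume (dyadicCube n k m) = ENNReal.ofReal ((2 : ℝ) ^ k) ^ n := by
  simp [dyadicCube_eq_pi, volume_pi_pi, Real.volume_Ico, add_mul]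

theorem dyadicCube_subset_of_le {k k' : ℤ} (hk : k ≤ k') {m m' : Fin n → ℤ} {x : Fin n → ℝ}
    (hx : x ∈ dyadicCube n k m) (hx' : x ∈ dyadicCube n k' m') :
    dyadicCube n k m ⊆ dyadicCube n k' m' := by
  obtain ⟨d, rfl⟩ : ∃ d : ℕ, k' = k + d := ⟨(k' - k).toNat, by omega⟩
  have hscale : (2 : ℝ) ^ (k + d) = ((2 ^ d : ℤ) : ℝ) * 2 ^ k := by
    rw [zpow_add₀ two_ne_zero, mul_comm]; norm_cast
  simp only [dyadicCube_eq_pi, hscale, ← mul_assoc, mem_univ_pi] at hx hx' ⊢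
  exact pi_mono fun i _ => Ico_subset_Ico_of_mem (zpow_pos two_pos k) (hx i) (hx' i)

namespace IsDyadicCube

variable {Q Q' : Set (Fin n → ℝ)}

theorem measurableSet (hQ : IsDyadicCube Q) : MeasurableSet Q := by
  obtain ⟨k, m, rfl⟩ := hQ
  rw [dyadicCube_eq_pi]
  exact .univ_pi fun _ => measurableSet_Ico

theorem volume_ne_zero (hQ : IsDyadicCube Q) : volume Q ≠ 0 := by
  obtain ⟨k, m, rfl⟩ := hQ
  simp [volume_dyadicCube, zpow_pos]

theorem volume_ne_top (hQ : IsDyadicCube Q) : volume Q ≠ ⊤ := by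
  obtain ⟨k, m, rfl⟩ := hQ
  simp [volume_dyadicCube]

theorem isCube (hQ : IsDyadicCube Q) : IsCube Q := by
  obtain ⟨k, m, rfl⟩ := hQ
  refine ⟨fun i => m i * (2 : ℝ) ^ k, (2 : ℝ) ^ k, zpow_pos two_pos k, ?_⟩
  simp only [dyadicCube, add_mul, one_mul]

theorem subset_or_subset_of_not_disjoint (hQ : IsDyadicCube Q) (hQ' : IsDyadicCube Q')
    (h : ¬Disjoint Q Q') : Q ⊆ Q' ∨ Q' ⊆ Q := by
  obtain ⟨k, m, rfl⟩ := hQ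
  obtain ⟨k', m', rfl⟩ := hQ'
  obtain ⟨x, hx, hx'⟩ := not_disjoint_iff.mp h
  rcases le_total k k' with hk | hk
  · exact .inl (dyadicCube_subset_of_le hk hx hx')
  · exact .inr (dyadicCube_subset_of_le hk hx' hx)

theorem pairwiseDisjoint_maximal {T : Set (Set (Fin n → ℝ))}
    (hT : ∀ Q ∈ T, IsDyadicCube Q) : {P | Maximal (· ∈ T) P}.PairwiseDisjoint id := by
  intro P hP P' hP' hne
  by_contra h
  rcases (hT P hP.prop).subset_or_subset_of_not_disjoint (hT P' hP'.prop) h with hsub | hsub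
  · exact hne (hP.eq_of_le hP'.prop hsub)
  · exact hne (hP'.eq_of_le hP.prop hsub).symm

end IsDyadicCube

end DyadicCube

theorem avg_le_maximalOp {n : ℕ} (f : (Fin n → ℝ) → ℝ≥0∞) {Q : Set (Fin n → ℝ)}
    (hQ : IsCube Q) {x : Fin n → ℝ} (hx : x ∈ Q) : avg f Q ≤ maximalOp f x :=
  le_iSup₂_of_le Q hQ (le_iSup_of_le hx le_rfl)

section Sparse

variable {n : ℕ} {η : ℝ≥0∞} (σ : (Fin n → ℝ) → ℝ≥0∞)

theorem mul_mass_le_setLIntegral_maximalOp {Q P E : Set (Fin n → ℝ)} (hQ : IsDyadicCube Q)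
    (hQP : Q ⊆ P) (hEQ : E ⊆ Q) (hE : MeasurableSet E) (hηE : η * volume Q ≤ volume E) :
    η * mass σ Q ≤ ∫⁻ x in E, maximalOp (P.indicator σ) x := by
  have havg : avg (P.indicator σ) Q = mass σ Q / volume Q := by
    rw [avg, mass, mass, setLIntegral_congr_fun hQ.measurableSet
      fun x hx => indicator_of_mem (hQP hx) σ]
  calc η * mass σ Q = η * volume Q * (mass σ Q / volume Q) := by
        rw [mul_assoc, ENNReal.mul_div_cancel hQ.volume_ne_zero hQ.volume_ne_top]
    _ ≤ avg (P.indicator σ) Q * volume E := by rw [havg, mul_comm]; gcongr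
    _ = ∫⁻ _ in E, avg (P.indicator σ) Q := (setLIntegral_const _ _).symm
    _ ≤ ∫⁻ x in E, maximalOp (P.indicator σ) x :=
        setLIntegral_mono' hE fun x hx => avg_le_maximalOp _ hQ.isCube (hEQ hx)

namespace IsSparse

variable {S : Set (Set (Fin n → ℝ))}

theorem mul_sum_mass_le_mass_maximalOp (hS : IsSparse η S) {P : Set (Fin n → ℝ)}
    (G : Finset (Set (Fin n → ℝ))) (hG : ∀ Q ∈ G, Q ∈ S ∧ Q ⊆ P) :
    η * ∑ Q ∈ G, mass σ Q ≤ mass (maximalOp (P.indicator σ)) P := by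
  obtain ⟨hdy, E, hE, hdisj⟩ := hS
  calc η * ∑ Q ∈ G, mass σ Q = ∑ Q ∈ G, η * mass σ Q := Finset.mul_sum _ _ _
    _ ≤ ∑ Q ∈ G, ∫⁻ x in E Q, maximalOp (P.indicator σ) x :=
        Finset.sum_le_sum fun Q hQ =>
          have ⟨hQS, hQP⟩ := hG Q hQ
          mul_mass_le_setLIntegral_maximalOp σ (hdy Q hQS) hQP (hE Q hQS).1 (hE Q hQS).2.1
            (hE Q hQS).2.2
    _ ≤ mass (maximalOp (P.indicator σ)) P :=
        sum_setLIntegral_le_of_pairwiseDisjoint (hdisj.subset fun Q hQ => (hG Q hQ).1)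
          (fun Q hQ => (hE Q (hG Q hQ).1).2.1)
          (fun Q hQ => (hE Q (hG Q hQ).1).1.trans (hG Q hQ).2) _

theorem sum_mass_le_of_mass_maximalOp_le (hS : IsSparse η S) (hη0 : η ≠ 0) (hηtop : η ≠ ⊤)
    {R : Set (Fin n → ℝ)} {lam : ℝ≥0∞} (F : Finset (Set (Fin n → ℝ)))
    (hF : ∀ Q ∈ F, Q ∈ S ∧ Q ⊆ R ∧ mass (maximalOp (Q.indicator σ)) Q ≤ lam * mass σ Q) :
    ∑ Q ∈ F, mass σ Q ≤ η⁻¹ * lam * mass σ R := by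
  classical
  set maxCubes := F.filter (Maximal (· ∈ F))
  have hcover : ∀ Q ∈ F, ∃ P ∈ maxCubes, Q ⊆ P := fun Q hQ =>
    have ⟨P, hQP, hP⟩ := F.finite_toSet.exists_le_maximal hQ
    ⟨P, Finset.mem_filter.2 ⟨hP.prop, hP⟩, hQP⟩
  have hmem : ∀ P ∈ maxCubes, P ∈ F := fun P hP => (Finset.mem_filter.1 hP).1
  have hgroup : ∀ P ∈ maxCubes, ∑ Q ∈ F with Q ⊆ P, mass σ Q ≤ η⁻¹ * (lam * mass σ P) := by
    intro P hP
    have hpack := hS.mul_sum_mass_le_mass_maximalOp σ (P := P) (F.filter (· ⊆ P)) fun Q hQ =>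
      ⟨(hF Q (Finset.mem_filter.1 hQ).1).1, (Finset.mem_filter.1 hQ).2⟩
    calc ∑ Q ∈ F with Q ⊆ P, mass σ Q = η⁻¹ * (η * ∑ Q ∈ F with Q ⊆ P, mass σ Q) := by
          rw [← mul_assoc, ENNReal.inv_mul_cancel hη0 hηtop, one_mul]
      _ ≤ η⁻¹ * (lam * mass σ P) := by
          gcongr η⁻¹ * ?_; exact hpack.trans (hF P (hmem P hP)).2.2
  have hdisj : (maxCubes : Set (Set (Fin n → ℝ))).PairwiseDisjoint id :=
    (IsDyadicCube.pairwiseDisjoint_maximal (T := (F : Set (Set (Fin n → ℝ))))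
      fun Q hQ => hS.1 Q (hF Q hQ).1).subset fun P hP => (Finset.mem_filter.1 hP).2
  calc ∑ Q ∈ F, mass σ Q ≤ ∑ P ∈ maxCubes, ∑ Q ∈ F with Q ⊆ P, mass σ Q :=
        Finset.sum_le_sum_sum_filter_of_forall_exists hcover _
    _ ≤ ∑ P ∈ maxCubes, η⁻¹ * (lam * mass σ P) := Finset.sum_le_sum hgroup
    _ = η⁻¹ * lam * ∑ P ∈ maxCubes, mass σ P := by simp only [Finset.mul_sum, mul_assoc]
    _ ≤ η⁻¹ * lam * mass σ R := by
        gcongr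
        exact sum_setLIntegral_le_of_pairwiseDisjoint hdisj
          (fun P hP => (hS.1 P (hF P (hmem P hP)).1).measurableSet)
          (fun P hP => (hF P (hmem P hP)).2.1) σ

theorem tsum_mass_le_of_mass_maximalOp_le (hS : IsSparse η S) (hη0 : η ≠ 0) (hηtop : η ≠ ⊤)
    {R : Set (Fin n → ℝ)} (lam : ℝ≥0∞) {p : Set (Fin n → ℝ) → Prop}
    (hp : ∀ Q, p Q → Q ∈ S ∧ Q ⊆ R ∧ mass (maximalOp (Q.indicator σ)) Q ≤ lam * mass σ Q) :
    ∑' Q : {Q // p Q}, mass σ Q.1 ≤ η⁻¹ * lam * mass σ R :=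
  ENNReal.summable.tsum_le_of_sum_le fun s =>
    (Finset.sum_map s (.subtype p) (mass σ)).symm.le.trans <|
      hS.sum_mass_le_of_mass_maximalOp_le σ hη0 hηtop _ fun Q hQ => by
        obtain ⟨Q, -, rfl⟩ := Finset.mem_map.1 hQ
        exact hp _ Q.2

end IsSparse

end Sparse

theorem statement6 (eta : ℝ≥0∞) (heta0 : 0 < eta) (heta1 : eta ≤ 1) (n : ℕ) :
    ∃ C : ℝ≥0∞, C < ∞ ∧
      ∀ (σ : (Fin n → ℝ) → ℝ≥0∞), Measurable σ →
      ∀ (S : Set (Set (Fin n → ℝ))), IsSparse eta S →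
      (∀ Q ∈ S, 0 < mass σ Q) →
      ∀ R ∈ S,
      (∀ lam : ℝ≥0∞, 1 ≤ lam →
        ∑' Q : {Q : Set (Fin n → ℝ) // Q ∈ S ∧ Q ⊆ R ∧
            mass (maximalOp (Q.indicator σ)) Q ≤ lam * mass σ Q},
          mass σ Q.1 ≤ C * lam * mass σ R) ∧
      (∀ k : ℕ,
        ∑' Q : {Q : Set (Fin n → ℝ) // Q ∈ S ∧ Q ⊆ R ∧
            (2:ℝ≥0∞) ^ (k:ℝ) * mass σ Q ≤ mass (maximalOp (Q.indicator σ)) Q ∧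
            mass (maximalOp (Q.indicator σ)) Q ≤ (2:ℝ≥0∞) ^ ((k:ℝ)+1) * mass σ Q},
          mass σ Q.1 ≤ C * (2:ℝ≥0∞) ^ (k:ℝ) * mass σ R) := by
  have heta_top : eta ≠ ⊤ := (heta1.trans_lt ENNReal.one_lt_top).ne
  refine ⟨2 * eta⁻¹, ENNReal.mul_lt_top ENNReal.ofNat_lt_top (ENNReal.inv_lt_top.2 heta0),
    fun σ _ S hS _ R _ => ⟨fun lam _ => ?_, fun k => ?_⟩⟩
  · calc _ ≤ eta⁻¹ * lam * mass σ R :=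
          hS.tsum_mass_le_of_mass_maximalOp_le σ heta0.ne' heta_top lam fun _ hQ => hQ
      _ ≤ 2 * eta⁻¹ * lam * mass σ R := by gcongr; exact le_mul_of_one_le_left' one_le_two
  · calc _ ≤ eta⁻¹ * 2 ^ ((k : ℝ) + 1) * mass σ R :=
          hS.tsum_mass_le_of_mass_maximalOp_le σ heta0.ne' heta_top _ fun _ hQ =>
            ⟨hQ.1, hQ.2.1, hQ.2.2.2⟩
      _ = 2 * eta⁻¹ * 2 ^ (k : ℝ) * mass σ R := by
          rw [ENNReal.rpow_add _ _ two_ne_zero ENNReal.ofNat_ne_top, ENNReal.rpow_one]; ring
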